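/- arXiv:2405.14703 — 8 statements merged into one kernel-verified Lean document; each statement's English description precedes it below -/
import Mathlib

section
/- Let p : D ⥤ C be a ULF functor of categories. Then every morphism of D lying over an identity is itself an identity: for every morphism α : X ⟶ Y of D with an identification p.obj X = p.obj Y under which p.map α equals the identity morphism, one has X = Y and α is the identity morphism of X. -/
open CategoryTheory

universe v u v' u'

/-- A functor `p : D ⥤ C` has the unique lifting of factorizations property (is ULF) if
every factorization of the image of a morphism lifts uniquely. -/
def IsULF {D : Type u} {C : Type u'} [Category.{v} D] [Category.{v'} C] (p : D ⥤ C) : Prop :=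
  ∀ ⦃X Y : D⦄ (α : X ⟶ Y) ⦃B : C⦄ (u : p.obj X ⟶ B) (v : B ⟶ p.obj Y),
    p.map α = u ≫ v →
    ∃! t : Σ (Z : D), (X ⟶ Z) × (Z ⟶ Y),
      ∃ e : p.obj t.1 = B,
        t.2.1 ≫ t.2.2 = α ∧ p.map t.2.1 ≫ eqToHom e = u ∧ p.map t.2.2 = eqToHom e ≫ v

/-- Every morphism lying over an identity along a ULF functor is itself an identity. -/
theorem IsULF.map_eq_id {D : Type u} {C : Type u'} [Category.{v} D] [Category.{v'} C]
    {p : D ⥤ C} (hp : IsULF p) {X Y : D} (α : X ⟶ Y) (e : p.obj X = p.obj Y)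
    (hα : p.map α = eqToHom e) : ∃ e' : X = Y, α = eqToHom e' := by
  obtain ⟨t, ht, huniq⟩ := hp α (eqToHom e) (𝟙 _) (by simp [hα])
  have h1 : (⟨X, 𝟙 X, α⟩ : Σ (Z : D), (X ⟶ Z) × (Z ⟶ Y)) = t :=
    huniq ⟨X, 𝟙 X, α⟩ ⟨e, by simp, by simp, by simp [hα]⟩
  have h2 : (⟨Y, α, 𝟙 Y⟩ : Σ (Z : D), (X ⟶ Z) × (Z ⟶ Y)) = t :=
    huniq ⟨Y, α, 𝟙 Y⟩ ⟨rfl, by simp, by simp [hα], by simp⟩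
  have h := h1.trans h2.symm
  have hXY : X = Y := congrArg Sigma.fst h
  subst hXY
  refine ⟨rfl, ?_⟩
  have h' : ((𝟙 X, α) : (X ⟶ X) × (X ⟶ X)) = (α, 𝟙 X) := by simpa using h
  simpa using (congrArg Prod.fst h').symm
end

section
/- Let φ : H ⥤q G be a prefunctor of quivers. Then the induced functor Paths H ⥤ Paths G between the free categories, which sends each path in H to its image path in G, is ULF. -/
open CategoryTheory

universe v u v' u' w w'

/-- The functor between free categories induced by a prefunctor of quivers,
sending each path to its image path. -/
def pathsFunctor {H : Type u} {G : Type u'} [Quiver.{v + 1} H] [Quiver.{v' + 1} G]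
    (φ : H ⥤q G) : Paths H ⥤ Paths G where
  obj X := φ.obj X
  map f := φ.mapPath f
  map_id _ := rfl
  map_comp f g := φ.mapPath_comp f g

/-!
Cutting a path after its first `k` arrows is the only way to factor it with a first
factor of length `k`. Since `φ` preserves lengths, a factorization `u ≫ v` of `φ(α)` lifts by
cutting `α` at the same position, and every lift has its second factor of length `|v|`, so it
is that cut.
-/

namespace Quiver.Path

variable {V : Type u} [Quiver.{v} V]

theorem sigma_mk_eq_of_comp_eq_comp {X Y Z Z' : V} {β : Path X Z} {γ : Path Z Y}
    {β' : Path X Z'} {γ' : Path Z' Y} (h : β.comp γ = β'.comp γ')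
    (hγ : γ.length = γ'.length) :
    (⟨Z, β, γ⟩ : Σ Z, Path X Z × Path Z Y) = ⟨Z', β', γ'⟩ := by
  induction γ generalizing Z' with
  | nil =>
    obtain rfl := eq_of_length_zero γ' hγ.symm
    obtain rfl := eq_nil_of_length_zero γ' hγ.symm
    rw [comp_nil, comp_nil] at h
    rw [h]
  | cons δ e ih =>
    cases γ' with
    | nil => cases hγ
    | cons δ' e' =>
      simp only [comp_cons, cons.injEq] at h
      obtain ⟨rfl, hδ, he⟩ := h
      cases ih hδ.eq (Nat.succ.inj hγ)
      cases he
      rfl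

end Quiver.Path

namespace Prefunctor

variable {V : Type u} {W : Type u'} [Quiver.{v} V] [Quiver.{v'} W]

theorem mapPath_length (φ : V ⥤q W) {X Y : V} (p : Quiver.Path X Y) :
    (φ.mapPath p).length = p.length := by
  induction p with
  | nil => rfl
  | cons p _ ih => exact congrArg Nat.succ ih

theorem exists_comp_eq_of_mapPath_eq_comp (φ : V ⥤q W) {X Y : V} {B : W}
    (u : Quiver.Path (φ.obj X) B) (v : Quiver.Path B (φ.obj Y)) {α : Quiver.Path X Y}
    (h : φ.mapPath α = u.comp v) :
    ∃ t : Σ Z, Quiver.Path X Z × Quiver.Path Z Y, t.2.1.comp t.2.2 = α ∧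
      (⟨φ.obj t.1, φ.mapPath t.2.1, φ.mapPath t.2.2⟩ :
        Σ B, Quiver.Path (φ.obj X) B × Quiver.Path B (φ.obj Y)) = ⟨B, u, v⟩ := by
  cases v with
  | nil => exact ⟨⟨Y, α, .nil⟩, rfl, by rw [h]; rfl⟩
  | cons w a =>
    cases α with
    | nil => simpa using congrArg Quiver.Path.length h
    | cons α' a₀ =>
      simp only [mapPath_cons, Quiver.Path.comp_cons, Quiver.Path.cons.injEq] at h
      obtain ⟨rfl, hα', ha₀⟩ := h
      obtain ⟨⟨Z, β, γ⟩, hcomp, hmap⟩ :=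
        exists_comp_eq_of_mapPath_eq_comp φ u w hα'.eq
      refine ⟨⟨Z, β, γ.cons a₀⟩, by rw [Quiver.Path.comp_cons, hcomp], ?_⟩
      cases hmap
      cases ha₀
      rfl

end Prefunctor

namespace CategoryTheory

theorem sigma_mk_eq_mk_iff_eqToHom {C : Type u} [Category.{v} C] {A D B B' : C}
    (u : A ⟶ B) (v : B ⟶ D) (u' : A ⟶ B') (v' : B' ⟶ D) :
    (⟨B, u, v⟩ : Σ B, (A ⟶ B) × (B ⟶ D)) = ⟨B', u', v'⟩ ↔
      ∃ e : B = B', u ≫ eqToHom e = u' ∧ v = eqToHom e ≫ v' := by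
  constructor
  · rintro ⟨⟩
    exact ⟨rfl, by simp, by simp⟩
  · rintro ⟨rfl, rfl, rfl⟩
    simp

end CategoryTheory

/-- The functor between free categories induced by a prefunctor of quivers is ULF. -/
theorem pathsFunctor_isULF {H : Type u} {G : Type u'} [Quiver.{v + 1} H] [Quiver.{v' + 1} G]
    (φ : H ⥤q G) : IsULF (pathsFunctor φ) := by
  intro X Y α B u v h
  obtain ⟨⟨Z, β, γ⟩, hcomp, hmap⟩ := φ.exists_comp_eq_of_mapPath_eq_comp u v h
  obtain ⟨e, hu, hv⟩ := (sigma_mk_eq_mk_iff_eqToHom (C := Paths G) _ _ u v).1 hmap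
  refine ⟨⟨Z, β, γ⟩, ⟨e, hcomp, hu, hv⟩, ?_⟩
  rintro ⟨Z', β', γ'⟩ ⟨e', hcomp', hu', hv'⟩
  have hmap' := (sigma_mk_eq_mk_iff_eqToHom (C := Paths G) _ _ u v).2 ⟨e', hu', hv'⟩
  have hlen : γ'.length = γ.length := by
    rw [← φ.mapPath_length γ', ← φ.mapPath_length γ]
    exact congrArg (fun s => s.2.2.length) (hmap'.trans hmap.symm)
  exact Quiver.Path.sigma_mk_eq_of_comp_eq_comp (V := H) (hcomp'.trans hcomp.symm) hlen
end

section
/- Let G be a quiver and let p : D ⥤ Paths G be a ULF functor into the free category on G. Define the quiver H whose vertices are the objects of D and whose edges from X to Y are the morphisms α : X ⟶ Y of D such that p.map α is a path of length 1. Then the canonical functor Paths H ⥤ D, which is the identity on objects and sends a path of edges to the composite in D of its constituent morphisms, is an isomorphism of categories (bijective on objects and bijective on each hom-set); in particular every morphism of D factors uniquely as a composite of morphisms lying over single edges of G. -/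
open CategoryTheory

universe v u v' u'

variable {D : Type u} {G : Type u'} [Category.{v} D] [Quiver.{v' + 1} G]

/-- The vertices of the quiver of generators associated to a functor `p : D ⥤ Paths G`:
they are just the objects of `D`. -/
structure Vert (p : D ⥤ Paths G) where
  obj : D

/-- The quiver of generators associated to `p : D ⥤ Paths G`: edges from `X` to `Y` are the
morphisms `α : X ⟶ Y` of `D` such that `p.map α` is a path of length 1. -/
instance (p : D ⥤ Paths G) : Quiver (Vert p) :=
  ⟨fun X Y => { α : X.obj ⟶ Y.obj // Quiver.Path.length (p.map α) = 1 }⟩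

/-- The canonical functor from the free category on the quiver of generators to `D`:
it is the identity on objects and sends a path of edges to the composite in `D` of its
constituent morphisms. -/
def canonical (p : D ⥤ Paths G) : Paths (Vert p) ⥤ D :=
  Paths.lift { obj := fun X => X.obj, map := fun e => e.val }

/-!
Induct on the length of the path `p.map α`. A morphism lying over a path of length zero is an
identity, because ULF identifies its two trivial factorizations `α ≫ 𝟙` and `𝟙 ≫ α`. If
`p.map α` ends with an edge `g`, lifting the factorization `q ≫ g` splits off a last generator
of `α`, which gives surjectivity. Conversely, the last generators of two paths with the same
composite lie over the same final edge, so ULF uniqueness identifies them, which gives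
injectivity.
-/

section Factorisations

variable {C : Type*} [Category C]

theorem sigma_factor_eq_iff {A Z B₁ B₂ : C} (u₁ : A ⟶ B₁) (v₁ : B₁ ⟶ Z) (u₂ : A ⟶ B₂)
    (v₂ : B₂ ⟶ Z) :
    (⟨B₁, u₁, v₁⟩ : Σ B, (A ⟶ B) × (B ⟶ Z)) = ⟨B₂, u₂, v₂⟩ ↔
      ∃ e : B₁ = B₂, u₁ ≫ eqToHom e = u₂ ∧ v₁ = eqToHom e ≫ v₂ := by
  constructor
  · rintro ⟨⟩
    exact ⟨rfl, by simp, by simp⟩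
  · rintro ⟨rfl, rfl, rfl⟩
    simp

namespace IsULF

variable {p : D ⥤ C}

theorem exists_factor (hp : IsULF p) {X Y : D} (α : X ⟶ Y) {B : C} (u : p.obj X ⟶ B)
    (v : B ⟶ p.obj Y) (h : p.map α = u ≫ v) :
    ∃ (Z : D) (β : X ⟶ Z) (γ : Z ⟶ Y), β ≫ γ = α ∧
      (⟨p.obj Z, p.map β, p.map γ⟩ : Σ B, (p.obj X ⟶ B) × (B ⟶ p.obj Y)) = ⟨B, u, v⟩ := by
  obtain ⟨⟨Z, β, γ⟩, ⟨e, hα, hu, hv⟩, -⟩ := hp α u v h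
  exact ⟨Z, β, γ, hα, (sigma_factor_eq_iff _ _ _ _).2 ⟨e, hu, hv⟩⟩

theorem factor_ext (hp : IsULF p) {X Y Z₁ Z₂ : D} (β₁ : X ⟶ Z₁) (γ₁ : Z₁ ⟶ Y)
    (β₂ : X ⟶ Z₂) (γ₂ : Z₂ ⟶ Y) (h : β₁ ≫ γ₁ = β₂ ≫ γ₂)
    (hmap : (⟨p.obj Z₁, p.map β₁, p.map γ₁⟩ : Σ B, (p.obj X ⟶ B) × (B ⟶ p.obj Y)) =
      ⟨p.obj Z₂, p.map β₂, p.map γ₂⟩) :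
    (⟨Z₁, β₁, γ₁⟩ : Σ Z, (X ⟶ Z) × (Z ⟶ Y)) = ⟨Z₂, β₂, γ₂⟩ := by
  obtain ⟨e, hβ, hγ⟩ := (sigma_factor_eq_iff _ _ _ _).1 hmap.symm
  exact (hp (β₁ ≫ γ₁) _ _ (p.map_comp β₁ γ₁)).unique ⟨rfl, rfl, by simp, by simp⟩
    ⟨e, h.symm, hβ, hγ⟩

theorem eq_eqToHom_of_map_eq_eqToHom (hp : IsULF p) {X Y : D} (α : X ⟶ Y)
    {e : p.obj X = p.obj Y} (h : p.map α = eqToHom e) : ∃ e' : X = Y, α = eqToHom e' := by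
  have hfactor := hp.factor_ext α (𝟙 Y) (𝟙 X) α (by simp) <|
    (sigma_factor_eq_iff _ _ _ _).2 ⟨e.symm, by simp [h], by simp [h]⟩
  obtain ⟨e', hα, -⟩ := (sigma_factor_eq_iff _ _ _ _).1 hfactor
  exact ⟨e'.symm, by simpa [comp_eqToHom_iff] using hα⟩

end IsULF

end Factorisations

section PathLength

variable {V : Type*} [Quiver V]

theorem Quiver.Path.eq_toPath_of_length_eq_one {a b : V} (f : Quiver.Path a b)
    (h : f.length = 1) : ∃ g : a ⟶ b, f = g.toPath := by
  obtain ⟨c, g, q, hq, rfl⟩ := f.eq_toPath_comp_of_length_eq_succ (n := 0) h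
  obtain rfl := Quiver.Path.eq_of_length_zero q hq
  obtain rfl := Quiver.Path.eq_nil_of_length_zero q hq
  exact ⟨g, rfl⟩

namespace CategoryTheory.Paths

theorem length_comp {x y z : Paths V} (f : x ⟶ y) (g : y ⟶ z) :
    Quiver.Path.length (f ≫ g) = Quiver.Path.length f + Quiver.Path.length g :=
  Quiver.Path.length_comp f g

theorem eq_eqToHom_of_length_eq_zero {x y : Paths V} (f : x ⟶ y)
    (h : Quiver.Path.length f = 0) : ∃ e : x = y, f = eqToHom e := by
  obtain rfl := Quiver.Path.eq_of_length_zero f h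
  exact ⟨rfl, Quiver.Path.eq_nil_of_length_zero f h⟩

theorem sigma_factor_eq_of_comp_eq {x y b₁ b₂ : Paths V} (u₁ : x ⟶ b₁) (v₁ : b₁ ⟶ y)
    (u₂ : x ⟶ b₂) (v₂ : b₂ ⟶ y) (h₁ : Quiver.Path.length v₁ = 1)
    (h₂ : Quiver.Path.length v₂ = 1) (h : u₁ ≫ v₁ = u₂ ≫ v₂) :
    (⟨b₁, u₁, v₁⟩ : Σ b, (x ⟶ b) × (b ⟶ y)) = ⟨b₂, u₂, v₂⟩ := by
  obtain ⟨g₁, rfl⟩ := Quiver.Path.eq_toPath_of_length_eq_one v₁ h₁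
  obtain ⟨g₂, rfl⟩ := Quiver.Path.eq_toPath_of_length_eq_one v₂ h₂
  change u₁.cons g₁ = u₂.cons g₂ at h
  obtain ⟨rfl, hu, hg⟩ := Quiver.Path.cons.inj h
  cases hu
  cases hg
  rfl

theorem exists_eq_comp_of_length_eq_succ {x : Paths V} {y : V} (f : x ⟶ (of V).obj y)
    {n : ℕ} (h : Quiver.Path.length f = n + 1) :
    ∃ (b : V) (q : x ⟶ (of V).obj b) (g : b ⟶ y),
      f = q ≫ (of V).map g ∧ Quiver.Path.length q = n := by
  obtain ⟨b, q, g, rfl⟩ := (Quiver.Path.length_ne_zero_iff_eq_cons f).1 (by omega)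
  exact ⟨b, q, g, rfl, Nat.succ_injective h⟩

end CategoryTheory.Paths

end PathLength

section Canonical

variable {p : D ⥤ Paths G}

@[simp]
theorem canonical_map_of_map {X Y : Vert p} (e : X ⟶ Y) :
    (canonical p).map ((Paths.of (Vert p)).map e) = e.val :=
  Paths.lift_toPath _ e

theorem length_map_canonical_map {X Y : Paths (Vert p)} (f : X ⟶ Y) :
    Quiver.Path.length (p.map ((canonical p).map f)) = Quiver.Path.length f := by
  induction f using Paths.induction_fixed_source with
  | id => exact congrArg Quiver.Path.length (p.map_id _)
  | comp f e ih =>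
    rw [Functor.map_comp, Functor.map_comp, Paths.length_comp, Paths.length_comp, ih,
      canonical_map_of_map]
    exact congrArg (Quiver.Path.length f + ·) e.2

theorem IsULF.canonical_map_surjective (hp : IsULF p) (X Y : Paths (Vert p)) :
    Function.Surjective (fun f : X ⟶ Y => (canonical p).map f) := by
  suffices ∀ (n : ℕ) {X : Paths (Vert p)} {Y : Vert p}
      (α : (canonical p).obj X ⟶ (canonical p).obj ((Paths.of (Vert p)).obj Y)),
      Quiver.Path.length (p.map α) = n → ∃ f : X ⟶ Y, (canonical p).map f = α from
    fun α => this _ α rfl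
  intro n
  induction n with
  | zero =>
    rintro ⟨x⟩ ⟨y⟩ α h
    obtain ⟨e, he⟩ := Paths.eq_eqToHom_of_length_eq_zero _ h
    obtain ⟨e', rfl⟩ := hp.eq_eqToHom_of_map_eq_eqToHom α he
    obtain rfl : x = y := e'
    exact ⟨𝟙 _, rfl⟩
  | succ n ih =>
    intro X Y α h
    obtain ⟨b, q, g, hα, hq⟩ := Paths.exists_eq_comp_of_length_eq_succ _ h
    obtain ⟨Z, β, γ, rfl, hfactor⟩ := hp.exists_factor _ q ((Paths.of G).map g) hα
    obtain ⟨rfl, hmap⟩ := Sigma.mk.inj_iff.1 hfactor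
    obtain ⟨hβ, hγ⟩ := Prod.mk.inj (eq_of_heq hmap)
    obtain ⟨f, rfl⟩ := ih (Y := ⟨Z⟩) β ((congrArg Quiver.Path.length hβ).trans hq)
    have hγ₁ : Quiver.Path.length (p.map γ) = 1 :=
      (congrArg Quiver.Path.length hγ).trans (Quiver.Path.length_toPath g)
    exact ⟨f ≫ (Paths.of (Vert p)).map ⟨γ, hγ₁⟩,
      ((canonical p).map_comp _ _).trans (congrArg _ (canonical_map_of_map _))⟩

theorem length_eq_of_canonical_map_eq {X Y : Paths (Vert p)} {f₁ f₂ : X ⟶ Y}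
    (h : (canonical p).map f₁ = (canonical p).map f₂) :
    Quiver.Path.length f₁ = Quiver.Path.length f₂ :=
  (length_map_canonical_map f₁).symm.trans <|
    (congrArg (fun α => Quiver.Path.length (p.map α)) h).trans (length_map_canonical_map f₂)

theorem IsULF.canonical_map_injective (hp : IsULF p) (X Y : Paths (Vert p)) :
    Function.Injective (fun f : X ⟶ Y => (canonical p).map f) := by
  intro f₁
  induction f₁ using Paths.induction_fixed_source with
  | id =>
    intro f₂ h
    exact (Quiver.Path.eq_nil_of_length_zero f₂ (length_eq_of_canonical_map_eq h).symm).symm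
  | @comp u₁ v₁ q₁ e₁ ih =>
    intro f₂ h
    obtain ⟨w₂, q₂, e₂, rfl, -⟩ := Paths.exists_eq_comp_of_length_eq_succ f₂
      ((length_eq_of_canonical_map_eq h).symm.trans (Paths.length_comp _ _))
    simp only [Functor.map_comp, canonical_map_of_map] at h
    have hfactor := hp.factor_ext _ _ _ _ h <|
      Paths.sigma_factor_eq_of_comp_eq _ _ _ _ e₁.2 e₂.2
        ((p.map_comp _ _).symm.trans ((congrArg p.map h).trans (p.map_comp _ _)))
    rcases u₁ with ⟨u₁⟩
    rcases w₂ with ⟨w₂⟩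
    obtain ⟨hu, hmap⟩ := Sigma.mk.inj_iff.1 hfactor
    obtain rfl : u₁ = w₂ := hu
    obtain ⟨hq, he⟩ := Prod.mk.inj (eq_of_heq hmap)
    rw [ih hq, Subtype.ext he]

end Canonical

/-- If `p : D ⥤ Paths G` is ULF, then the canonical functor `Paths (Vert p) ⥤ D` is an
isomorphism of categories: bijective on objects and bijective on each hom-set.
In particular every morphism of `D` factors uniquely as a composite of morphisms lying
over single edges of `G`. -/
theorem canonical_isIso (p : D ⥤ Paths G) (hp : IsULF p) :
    Function.Bijective (canonical p).obj ∧
      ∀ X Y : Paths (Vert p),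
        Function.Bijective (fun f : X ⟶ Y => (canonical p).map f) :=
  ⟨⟨fun ⟨_⟩ ⟨_⟩ h => congrArg Vert.mk h, fun d => ⟨⟨d⟩, rfl⟩⟩,
    fun X Y => ⟨hp.canonical_map_injective X Y, hp.canonical_map_surjective X Y⟩⟩
end

section
/- Let φ : H ⥤q G be a prefunctor of quivers where G is finite (G has finitely many vertices and, for each pair of vertices, finitely many edges). Then the induced functor Paths H ⥤ Paths G between free categories is finitary if and only if H is finite (H has finitely many vertices and finitely many edges in total). -/
open CategoryTheory

universe v u v' u'

/-- A functor `p : D ⥤ C` is finitary if its fibers over objects and over morphisms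
are all finite. -/
def IsFinitary {D : Type u} {C : Type u'} [Category.{v} D] [Category.{v'} C]
    (p : D ⥤ C) : Prop :=
  (∀ A : C, { X : D | p.obj X = A }.Finite) ∧
    ∀ (A B : C) (w : A ⟶ B),
      { t : Σ (X : D) (Y : D), X ⟶ Y |
        ∃ (hX : p.obj t.1 = A) (hY : p.obj t.2.1 = B),
          p.map t.2.2 = eqToHom hX ≫ w ≫ eqToHom hY.symm }.Finite

/-!
Over a finite quiver `G`, the finite fibres of `Paths H ⥤ Paths G` over the vertices of `G`
cover all vertices of `H`, and the finite fibres over the length-one paths of `G` contain all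
length-one paths of `H`, i.e. all edges. Conversely, `φ.mapPath` preserves length, so the fibre
over a path `w` consists of paths of length `w.length`, and a finite quiver has only finitely many
paths of bounded length.
-/

namespace CategoryTheory

variable {C : Type u'} [Category.{v'} C]

lemma sigma_mk_eq_sigma_mk_iff_eqToHom {X Y A B : C} (f : X ⟶ Y) (g : A ⟶ B) :
    (⟨X, Y, f⟩ : Σ X Y : C, X ⟶ Y) = ⟨A, B, g⟩ ↔
      ∃ (hX : X = A) (hY : Y = B), f = eqToHom hX ≫ g ≫ eqToHom hY.symm := by
  constructor
  · rintro ⟨⟩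
    exact ⟨rfl, rfl, by simp⟩
  · rintro ⟨rfl, rfl, rfl⟩
    simp

variable {D : Type u} [Category.{v} D]

def Functor.mapSigmaHom (p : D ⥤ C) (t : Σ X Y : D, X ⟶ Y) : Σ A B : C, A ⟶ B :=
  ⟨p.obj t.1, p.obj t.2.1, p.map t.2.2⟩

lemma isFinitary_iff (p : D ⥤ C) :
    IsFinitary p ↔ (∀ A, (p.obj ⁻¹' {A}).Finite) ∧ ∀ s, (p.mapSigmaHom ⁻¹' {s}).Finite := by
  simp only [IsFinitary, Sigma.forall, ← sigma_mk_eq_sigma_mk_iff_eqToHom]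
  rfl

namespace IsFinitary

variable {p : D ⥤ C}

lemma finite [Finite C] (hp : IsFinitary p) : Finite D :=
  Set.finite_univ_iff.1 <| by
    simpa using Set.finite_univ.preimage' fun A _ ↦ ((isFinitary_iff p).1 hp).1 A

lemma finite_preimage_mapSigmaHom (hp : IsFinitary p) {S : Set (Σ A B : C, A ⟶ B)}
    (hS : S.Finite) :
    (p.mapSigmaHom ⁻¹' S).Finite :=
  hS.preimage' fun s _ ↦ ((isFinitary_iff p).1 hp).2 s

end IsFinitary

end CategoryTheory

lemma Prefunctor.length_mapPath {V : Type u} {W : Type u'} [Quiver.{v + 1} V]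
    [Quiver.{v' + 1} W] (φ : V ⥤q W) {a b : V} (p : Quiver.Path a b) :
    (φ.mapPath p).length = p.length := by
  induction p with
  | nil => rfl
  | cons p e ih => simp [Prefunctor.mapPath_cons, ih]

namespace Quiver

variable {V : Type u} [Quiver.{v + 1} V]

lemma Path.finite_setOf_length_le [Finite V] [∀ a b : V, Finite (a ⟶ b)] (n : ℕ) :
    {t : Σ a b : V, Path a b | t.2.2.length ≤ n}.Finite := by
  induction n with
  | zero =>
    refine (Set.finite_range fun a : V ↦ (⟨a, a, .nil⟩ : Σ a b : V, Path a b)).subset ?_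
    rintro ⟨a, b, _ | _⟩ h
    · exact ⟨a, rfl⟩
    · simp at h
  | succ n ih =>
    -- a path of length `≤ n + 1` is `nil` or a path of length `≤ n` followed by one edge
    refine ((Set.finite_range fun a : V ↦ (⟨a, a, .nil⟩ : Σ a b : V, Path a b)).union
      (ih.biUnion fun t _ ↦ Set.finite_iUnion fun c : V ↦ Set.finite_iUnion fun e : t.2.1 ⟶ c ↦
        Set.finite_singleton (⟨t.1, c, t.2.2.cons e⟩ : Σ a b : V, Path a b))).subset ?_
    rintro ⟨a, b, _ | ⟨q, e⟩⟩ h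
    · exact .inl ⟨a, rfl⟩
    · refine .inr (Set.mem_biUnion (x := ⟨a, _, q⟩) ?_ ?_)
      · simpa using h
      · simp

variable (V)

def sigmaToPath (e : Σ a b : V, a ⟶ b) : Σ a b : V, Path a b :=
  ⟨e.1, e.2.1, e.2.2.toPath⟩

lemma sigmaToPath_injective : Function.Injective (sigmaToPath V) := by
  rintro ⟨a, b, e⟩ ⟨a', b', e'⟩ h
  simp only [sigmaToPath, Hom.toPath, Sigma.mk.injEq] at h
  obtain ⟨rfl, h⟩ := h
  obtain ⟨rfl, h⟩ := Sigma.mk.inj_iff.1 (eq_of_heq h)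
  simp only [heq_eq_eq, Path.cons.injEq] at h
  simp [h]

end Quiver

open Quiver

section

variable {H : Type u} {G : Type u'} [Quiver.{v + 1} H] [Quiver.{v' + 1} G]

lemma pathsFunctor_mapSigmaHom_sigmaToPath (φ : H ⥤q G) (e : Σ a b : H, a ⟶ b) :
    (pathsFunctor φ).mapSigmaHom (sigmaToPath H e) =
      sigmaToPath G ⟨φ.obj e.1, φ.obj e.2.1, φ.map e.2.2⟩ := by
  change (⟨_, _, φ.mapPath e.2.2.toPath⟩ : Σ a b : G, Path a b) = _
  rw [Prefunctor.mapPath_toPath]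
  rfl

lemma finite_sigma_hom_of_isFinitary_pathsFunctor [Finite G] [∀ a b : G, Finite (a ⟶ b)]
    (φ : H ⥤q G) (hφ : IsFinitary (pathsFunctor φ)) : Finite (Σ a b : H, a ⟶ b) := by
  rw [← Set.finite_range_iff (sigmaToPath_injective H)]
  refine (hφ.finite_preimage_mapSigmaHom (Set.finite_range (sigmaToPath G))).subset ?_
  rintro _ ⟨e, rfl⟩
  exact ⟨_, (pathsFunctor_mapSigmaHom_sigmaToPath φ e).symm⟩

lemma isFinitary_pathsFunctor [Finite H] [Finite (Σ a b : H, a ⟶ b)] (φ : H ⥤q G) :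
    IsFinitary (pathsFunctor φ) := by
  have (a b : H) : Finite (a ⟶ b) :=
    Finite.of_injective (fun e ↦ (⟨a, b, e⟩ : Σ a b : H, a ⟶ b))
      (sigma_mk_injective.comp sigma_mk_injective)
  have : Finite (Paths H) := ‹Finite H›
  refine (isFinitary_iff _).2
    ⟨fun A ↦ Set.toFinite _, fun s ↦ (Path.finite_setOf_length_le (V := H) s.2.2.length).subset ?_⟩
  rintro ⟨X, Y, p⟩ rfl
  exact (φ.length_mapPath p).ge

end

/-- For a prefunctor `φ : H ⥤q G` into a finite quiver `G`, the induced functor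
`Paths H ⥤ Paths G` is finitary iff the quiver `H` is finite (finitely many vertices and
finitely many edges in total). -/
theorem pathsFunctor_isFinitary_iff {H : Type u} {G : Type u'}
    [Quiver.{v + 1} H] [Quiver.{v' + 1} G] [Finite G] [∀ a b : G, Finite (a ⟶ b)]
    (φ : H ⥤q G) :
    IsFinitary (pathsFunctor φ) ↔ (Finite H ∧ Finite (Σ (a : H) (b : H), a ⟶ b)) := by
  refine ⟨fun hφ ↦ ⟨?_, finite_sigma_hom_of_isFinitary_pathsFunctor φ hφ⟩,
    fun ⟨_, _⟩ ↦ isFinitary_pathsFunctor φ⟩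
  have : Finite (Paths G) := ‹Finite G›
  exact hφ.finite
end

section
/- Let G be a quiver and let w : A ⟶ B be a morphism of the free category Paths G, i.e., a path in G of some length n. Then the set of factorizations of w, namely the set of triples (X, u, v) where X is an object, u : A ⟶ X and v : X ⟶ B are morphisms of Paths G with u ≫ v = w, is finite and has exactly n + 1 elements. -/
/-!
A factorization `u.comp v = w` of a path is determined by the length of `u`, and splitting `w`
after its first `i` edges shows that every `i ≤ w.length` occurs.
-/

open CategoryTheory

universe v u

namespace Quiver.Path

variable {V : Type*} [Quiver V] {a b : V}

def factorizations (w : Path a b) : Set (Σ x : V, Path a x × Path x b) :=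
  {t | t.2.1.comp t.2.2 = w}

theorem sigma_eq_of_comp_eq_of_length_eq {x y : V} {u : Path a x} {v : Path x b}
    {u' : Path a y} {v' : Path y b} (h : u.comp v = u'.comp v') (hl : u.length = u'.length) :
    (⟨x, u, v⟩ : Σ x : V, Path a x × Path x b) = ⟨y, u', v'⟩ := by
  obtain rfl : x = y := by
    have hx : (u.comp v).vertices[u.length]? = some x := by simp
    have hy : (u'.comp v').vertices[u'.length]? = some y := by simp
    rw [← h, ← hl, hx] at hy
    exact Option.some_injective _ hy
  obtain ⟨rfl, rfl⟩ := (comp_inj' hl).1 h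
  rfl

theorem length_fst_le_of_mem_factorizations {w : Path a b} {t : Σ x : V, Path a x × Path x b}
    (ht : t ∈ w.factorizations) : t.2.1.length ≤ w.length := by
  rw [← ht, length_comp]
  exact Nat.le_add_right _ _

noncomputable def factorizationsEquivFin (w : Path a b) : w.factorizations ≃ Fin (w.length + 1) :=
  Equiv.ofBijective
    (fun t => ⟨t.1.2.1.length, Nat.lt_succ_of_le (length_fst_le_of_mem_factorizations t.2)⟩) <| by
    constructor
    · rintro ⟨⟨x, u, v⟩, huv⟩ ⟨⟨y, u', v'⟩, huv'⟩ hl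
      exact Subtype.ext <| sigma_eq_of_comp_eq_of_length_eq (huv.trans huv'.symm) (Fin.mk.inj hl)
    · rintro ⟨i, hi⟩
      obtain ⟨x, u, v, rfl, rfl⟩ := w.exists_eq_comp_of_le_length (Nat.le_of_lt_succ hi)
      exact ⟨⟨⟨x, u, v⟩, rfl⟩, rfl⟩

end Quiver.Path

/-- For a morphism `w : A ⟶ B` of the free category on a quiver `G`, i.e. a path of some
length `n`, the set of factorizations `(X, u, v)` with `u ≫ v = w` is finite and has
exactly `n + 1` elements. -/
theorem paths_factorizations_finite_card {G : Type u} [Quiver.{v + 1} G]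
    (A B : Paths G) (w : A ⟶ B) :
    { t : Σ (X : Paths G), (A ⟶ X) × (X ⟶ B) | t.2.1 ≫ t.2.2 = w }.Finite ∧
      Nat.card { t : Σ (X : Paths G), (A ⟶ X) × (X ⟶ B) | t.2.1 ≫ t.2.2 = w } =
        Quiver.Path.length w + 1 := by
  let e : { t : Σ (X : Paths G), (A ⟶ X) × (X ⟶ B) | t.2.1 ≫ t.2.2 = w } ≃
      Fin (Quiver.Path.length w + 1) :=
    Quiver.Path.factorizationsEquivFin (V := G) w
  exact ⟨Set.finite_coe_iff.mp (.of_equiv _ e.symm), by rw [Nat.card_congr e, Nat.card_fin]⟩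
end

section
/- Let C and D be categories, A and B objects of C, and let L ⊆ (A ⟶ B) be a regular language of arrows in C. Let F : D ⥤ C be any functor and let R, S be objects of D with identifications F.obj R = A and F.obj S = B. Then the language { α : R ⟶ S | F.map α ∈ L (modulo the identifications) } ⊆ (R ⟶ S) is a regular language of arrows in D. -/
open CategoryTheory

universe vq uq vc uc v₁ u₁ v₂ u₂ v₃ u₃ v u v' u'

/-- A language of arrows `L ⊆ C(A,B)` is regular if it is the language recognized by a
nondeterministic finite-state automaton over `C`, i.e. a finitary ULF functor `p : Q ⥤ C`
with chosen initial and accepting states lying over `A` and `B`. -/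
def IsRegularLang.{w₁, w₂, w₃, w₄} {C : Type w₄} [Category.{w₃} C] {A B : C}
    (L : Set (A ⟶ B)) : Prop :=
  ∃ (Q : Type w₂) (_ : Category.{w₁} Q) (p : Q ⥤ C) (q₀ qf : Q)
    (h₀ : p.obj q₀ = A) (hf : p.obj qf = B),
    IsULF p ∧ IsFinitary p ∧
    L = { w : A ⟶ B | ∃ α : q₀ ⟶ qf, p.map α = eqToHom h₀ ≫ w ≫ eqToHom hf.symm }

/-!
The automaton `p : Q ⥤ C` recognising `L` is pulled back along `F`: the strict pullback `P` of
`p` and `F` has objects the pairs `(d, q)` with `F d = p q` and morphisms the pairs of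
morphisms with `F f = p g`. Factorizations of a morphism of `P` through its `D`-component are
exactly the factorizations of its `Q`-component lifting the `F`-images, so the projection
`P ⥤ D` inherits the ULF property, and its fibres inject into those of `p`, so it is finitary.
Morphisms `(R, q₀) ⟶ (S, qf)` of `P` over `α` are then exactly the morphisms `q₀ ⟶ qf` over `F α`.
-/

structure StrictPullback {D : Type u} {C : Type u'} {Q : Type u₃}
    [Category.{v} D] [Category.{v'} C] [Category.{v₃} Q] (F : D ⥤ C) (p : Q ⥤ C) :
    Type (max u u₃) where
  left : D
  right : Q
  eq : F.obj left = p.obj right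

namespace StrictPullback

variable {D : Type u} {C : Type u'} {Q : Type u₃}
  [Category.{v} D] [Category.{v'} C] [Category.{v₃} Q] {F : D ⥤ C} {p : Q ⥤ C}

@[ext]
structure Hom (X Y : StrictPullback F p) where
  left : X.left ⟶ Y.left
  right : X.right ⟶ Y.right
  comm : p.map right = eqToHom X.eq.symm ≫ F.map left ≫ eqToHom Y.eq

attribute [simp] Hom.comm

instance : Category.{max v v₃} (StrictPullback F p) where
  Hom := Hom
  id X := ⟨𝟙 _, 𝟙 _, by simp⟩
  comp f g := ⟨f.left ≫ g.left, f.right ≫ g.right, by simp⟩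

lemma hom_ext {X Y : StrictPullback F p} {f g : X ⟶ Y} (hl : f.left = g.left)
    (hr : f.right = g.right) : f = g :=
  Hom.ext hl hr

variable (F p) in
abbrev fst : StrictPullback F p ⥤ D where
  obj X := X.left
  map f := f.left

lemma exists_hom_left_eq_iff {X Y : StrictPullback F p} (a : X.left ⟶ Y.left) :
    (∃ f : X ⟶ Y, f.left = a) ↔
      ∃ g : X.right ⟶ Y.right, p.map g = eqToHom X.eq.symm ≫ F.map a ≫ eqToHom Y.eq :=
  ⟨fun ⟨f, hf⟩ => ⟨f.right, hf ▸ f.comm⟩, fun ⟨g, hg⟩ => ⟨⟨a, g, hg⟩, rfl⟩⟩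

lemma isULF_fst (hp : IsULF p) : IsULF (fst F p) := by
  intro X Y α B (u : X.left ⟶ B) (v : B ⟶ Y.left) (hα : α.left = u ≫ v)
  have hαr : p.map α.right = (eqToHom X.eq.symm ≫ F.map u) ≫ F.map v ≫ eqToHom Y.eq := by
    simp [hα]
  obtain ⟨⟨Z, β, γ⟩, ⟨e, hβγ, hβ, hγ⟩, huniq⟩ := hp α.right _ _ hαr
  have hβF : p.map β = eqToHom X.eq.symm ≫ F.map u ≫ eqToHom e.symm := by
    rw [← Category.assoc, ← hβ]; simp
  refine ⟨⟨⟨B, Z, e.symm⟩, ⟨u, β, hβF⟩, ⟨v, γ, hγ⟩⟩, ⟨rfl, hom_ext hα.symm hβγ, ?_, ?_⟩, ?_⟩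
  · exact Category.comp_id u
  · exact (Category.id_comp v).symm
  rintro ⟨⟨B', Z', e'⟩, ⟨u', β', hβ'⟩, ⟨v', γ', hγ'⟩⟩ ⟨hB, hcomp, hu, hv⟩
  obtain rfl : B' = B := hB
  obtain rfl : u' = u := by simpa using hu
  obtain rfl : v' = v := by simpa using hv
  have hlift := huniq ⟨Z', β', γ'⟩
    ⟨e'.symm, congrArg Hom.right hcomp, by simp [hβ'], by simp [hγ']⟩
  cases hlift
  rfl

lemma left_right_injective :
    Function.Injective fun X : StrictPullback F p => (X.left, X.right) := by
  rintro ⟨a, q, h⟩ ⟨a', q', h'⟩ hX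
  cases hX
  rfl

lemma sigmaHom_left_right_injective :
    Function.Injective fun t : Σ (X Y : StrictPullback F p), X ⟶ Y =>
      ((⟨t.1.left, t.2.1.left, t.2.2.left⟩ : Σ (X Y : D), X ⟶ Y),
        (⟨t.1.right, t.2.1.right, t.2.2.right⟩ : Σ (X Y : Q), X ⟶ Y)) := by
  rintro ⟨⟨a, q, h⟩, ⟨b, r, k⟩, ⟨f, g, c⟩⟩ ⟨⟨a', q', h'⟩, ⟨b', r', k'⟩, ⟨f', g', c'⟩⟩ ht
  obtain ⟨hl, hr⟩ := Prod.mk.inj ht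
  cases hl
  cases hr
  rfl

lemma isFinitary_fst (hp : IsFinitary p) : IsFinitary (fst F p) := by
  constructor
  · intro a
    refine Set.Finite.of_finite_image ?_ left_right_injective.injOn
    refine ((Set.finite_singleton a).prod (hp.1 (F.obj a))).subset ?_
    rintro _ ⟨X, rfl, rfl⟩
    exact ⟨rfl, X.eq.symm⟩
  · intro a b w
    refine Set.Finite.of_finite_image ?_ sigmaHom_left_right_injective.injOn
    refine ((Set.finite_singleton ⟨a, b, w⟩).prod (hp.2 (F.obj a) (F.obj b) (F.map w))).subset ?_
    rintro _ ⟨⟨X, Y, f⟩, ⟨rfl, rfl, hf⟩, rfl⟩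
    obtain rfl : f.left = w := by simpa using hf
    exact ⟨rfl, X.eq.symm, Y.eq.symm, f.comm⟩

end StrictPullback

/-- Regular languages of arrows are closed under inverse image along an arbitrary functor,
restricted to a hom-set. -/
theorem isRegularLang_preimage {C : Type u₁} [Category.{v₁} C] {D : Type u₂} [Category.{v₂} D]
    {A B : C} (L : Set (A ⟶ B)) (F : D ⥤ C) (R S : D)
    (hR : F.obj R = A) (hS : F.obj S = B)
    (hL : IsRegularLang.{vq, uq} L) :
    IsRegularLang.{max v₂ vq, max u₂ uq}
      { α : R ⟶ S | eqToHom hR.symm ≫ F.map α ≫ eqToHom hS ∈ L } := by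
  obtain ⟨Q, _, p, q₀, qf, h₀, hf, hULF, hFin, rfl⟩ := hL
  refine ⟨StrictPullback F p, inferInstance, StrictPullback.fst F p,
    ⟨R, q₀, hR.trans h₀.symm⟩, ⟨S, qf, hS.trans hf.symm⟩, rfl, rfl,
    StrictPullback.isULF_fst hULF, StrictPullback.isFinitary_fst hFin, ?_⟩
  ext α
  simp [StrictPullback.exists_hom_left_eq_iff]
end

section
/- Let C and D be categories, A and B objects of C, and let L ⊆ (A ⟶ B) be a regular language of arrows in C. If F : C ⥤ D is a finitary ULF functor, then the image F(L) = { F.map w | w ∈ L } ⊆ (F.obj A ⟶ F.obj B) is a regular language of arrows in D. -/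
open CategoryTheory

universe vq uq vc uc v₁ u₁ v₂ u₂ v₃ u₃ v u v' u'

/-
If `p : Q ⥤ C` is an automaton recognizing `L` and `F : C ⥤ D` is finitary and ULF, then the
composite `p ⋙ F` is again finitary and ULF, and it recognizes `F(L)` from the same states:
a factorization of `F (p α)` lifts first along `F` and then along `p`, and fibers of the
composite are finite unions of fibers of `p` indexed by a fiber of `F`.
-/

namespace CategoryTheory.Functor

variable {Q : Type u₃} {C : Type u₁} {D : Type u₂}
variable [Category.{v₃} Q] [Category.{v₁} C] [Category.{v₂} D]

theorem exists_eqToHom_of_factorization_eq {X Y Z Z' : C} {a : X ⟶ Z} {b : Z ⟶ Y}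
    {a' : X ⟶ Z'} {b' : Z' ⟶ Y} (h : (⟨Z, a, b⟩ : Σ W : C, (X ⟶ W) × (W ⟶ Y)) = ⟨Z', a', b'⟩) :
    ∃ e : Z = Z', a ≫ eqToHom e = a' ∧ b = eqToHom e ≫ b' := by
  obtain ⟨rfl, h⟩ := Sigma.mk.inj_iff.mp h
  obtain ⟨rfl, rfl⟩ := Prod.mk.inj (eq_of_heq h)
  exact ⟨rfl, by simp, by simp⟩

theorem isULF_comp {p : Q ⥤ C} {F : C ⥤ D} (hp : IsULF p) (hF : IsULF F) :
    IsULF (p ⋙ F) := by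
  intro X Y α B u v h
  obtain ⟨⟨Z', β', γ'⟩, ⟨e', hβγ', hβ', hγ'⟩, huniqF⟩ := hF (p.map α) u v h
  obtain ⟨⟨Z, β, γ⟩, ⟨e, hβγ, hβ, hγ⟩, huniqp⟩ := hp α β' γ' hβγ'.symm
  have heq : eqToHom ((congrArg F.obj e).trans e') = F.map (eqToHom e) ≫ eqToHom e' := by
    rw [← eqToHom_trans, eqToHom_map]
  refine ⟨⟨Z, β, γ⟩, ⟨(congrArg F.obj e).trans e', hβγ, ?_, ?_⟩, ?_⟩
  · change F.map (p.map β) ≫ _ = u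
    rw [heq, ← Category.assoc, ← F.map_comp, hβ, hβ']
  · change F.map (p.map γ) = _
    rw [heq, Category.assoc, ← hγ', ← F.map_comp, hγ]
  · rintro ⟨Z₂, β₂, γ₂⟩ ⟨e₂, hβγ₂, hβ₂, hγ₂⟩
    have hF₂ := huniqF ⟨p.obj Z₂, p.map β₂, p.map γ₂⟩
      ⟨e₂, by rw [← p.map_comp, hβγ₂], hβ₂, hγ₂⟩
    obtain ⟨f, hf₁, hf₂⟩ := exists_eqToHom_of_factorization_eq hF₂
    exact huniqp ⟨Z₂, β₂, γ₂⟩ ⟨f, hβγ₂, hf₁, hf₂⟩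

theorem isFinitary_comp {p : Q ⥤ C} {F : C ⥤ D} (hp : IsFinitary p) (hF : IsFinitary F) :
    IsFinitary (p ⋙ F) := by
  refine ⟨fun d => ?_, fun d d' w => ?_⟩
  · refine ((hF.1 d).biUnion fun A _ => hp.1 A).subset fun X hX => ?_
    exact Set.mem_biUnion (x := p.obj X) hX rfl
  · refine ((hF.2 d d' w).biUnion fun s _ => hp.2 s.1 s.2.1 s.2.2).subset ?_
    rintro ⟨X, Y, α⟩ ⟨hX, hY, hα⟩
    exact Set.mem_biUnion (x := (⟨p.obj X, p.obj Y, p.map α⟩ : Σ (A : C) (B : C), A ⟶ B))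
      ⟨hX, hY, hα⟩ ⟨rfl, rfl, by simp⟩

theorem image_map_recognized_eq (p : Q ⥤ C) (F : C ⥤ D) {q₀ qf : Q} {A B : C}
    (h₀ : p.obj q₀ = A) (hf : p.obj qf = B) :
    (fun w => F.map w) ''
        { w : A ⟶ B | ∃ α : q₀ ⟶ qf, p.map α = eqToHom h₀ ≫ w ≫ eqToHom hf.symm }
      = { w : F.obj A ⟶ F.obj B | ∃ α : q₀ ⟶ qf, (p ⋙ F).map α =
          eqToHom (congrArg F.obj h₀) ≫ w ≫ eqToHom (congrArg F.obj hf).symm } := by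
  subst h₀ hf
  ext w'
  simp only [eqToHom_refl, Category.id_comp, Category.comp_id, Functor.comp_map,
    Set.mem_image, Set.mem_ofPred_eq]
  constructor
  · rintro ⟨w, ⟨α, rfl⟩, rfl⟩
    exact ⟨α, rfl⟩
  · rintro ⟨α, rfl⟩
    exact ⟨p.map α, ⟨α, rfl⟩, rfl⟩

end CategoryTheory.Functor

/-- Regular languages of arrows are closed under image along a finitary ULF functor. -/
theorem isRegularLang_image {C : Type u₁} [Category.{v₁} C] {D : Type u₂} [Category.{v₂} D]
    {A B : C} (L : Set (A ⟶ B)) (F : C ⥤ D) (hULF : IsULF F) (hFin : IsFinitary F)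
    (hL : IsRegularLang.{vq, uq} L) :
    IsRegularLang.{vq, uq} ((fun w => F.map w) '' L : Set (F.obj A ⟶ F.obj B)) := by
  obtain ⟨Q, _, p, q₀, qf, h₀, hf, hULFp, hFinp, rfl⟩ := hL
  exact ⟨Q, inferInstance, p ⋙ F, q₀, qf, congrArg F.obj h₀, congrArg F.obj hf,
    Functor.isULF_comp hULFp hULF, Functor.isFinitary_comp hFinp hFin,
    Functor.image_map_recognized_eq p F h₀ hf⟩
end

section
/- Consider the one-object category SingleObj (Multiplicative ℝ≥0) associated to the additive monoid of nonnegative real numbers (so that endomorphisms of the unique object ∗ are nonnegative reals, composed by addition). The singleton language {1} ⊆ (∗ ⟶ ∗) is not a regular language of arrows: there is no category Q, finitary ULF functor p : Q ⥤ SingleObj (Multiplicative ℝ≥0), and objects q₀, q_f of Q such that the set of morphisms p.map α for α : q₀ ⟶ q_f equals {1}. -/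
open CategoryTheory

universe vq uq v u v' u'

open scoped NNReal


private lemma singleObj_eqToHom {M : Type*} [Monoid M] {a b : SingleObj M} (e : a = b) :
    eqToHom e = (1 : M) := by subst e; rfl

private lemma singleObj_comp {M : Type*} [Monoid M] {a b c : SingleObj M}
    (f : a ⟶ b) (g : b ⟶ c) : f ≫ g = (g * f : M) := rfl

private lemma singleObj_comp_eqToHom {M : Type*} [Monoid M] {a b c : SingleObj M}
    (f : a ⟶ b) (e : b = c) : f ≫ eqToHom e = (show M from f) := by
  subst e; simp

private lemma singleObj_eqToHom_comp {M : Type*} [Monoid M] {a b c : SingleObj M}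
    (e : a = b) (g : b ⟶ c) : eqToHom e ≫ g = (show M from g) := by
  subst e; simp

/-- In the one-object category associated to the additive monoid of nonnegative reals, the
singleton language `{1} ⊆ (∗ ⟶ ∗)` is not recognized by any finitary ULF functor with
chosen initial and accepting states: it is not a regular language of arrows. -/
theorem singleton_one_not_regular :
    ¬ ∃ (Q : Type uq) (_ : Category.{vq} Q)
        (p : Q ⥤ SingleObj (Multiplicative ℝ≥0)) (q₀ qf : Q),
        IsULF p ∧ IsFinitary p ∧
        { w : SingleObj.star (Multiplicative ℝ≥0) ⟶ SingleObj.star (Multiplicative ℝ≥0) |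
            ∃ α : q₀ ⟶ qf, p.map α = w } =
          {Multiplicative.ofAdd (1 : ℝ≥0)} := by
  rintro ⟨Q, _, p, q₀, qf, hULF, hFin, hLang⟩
  have hmem : Multiplicative.ofAdd (1 : ℝ≥0) ∈
      ({Multiplicative.ofAdd (1 : ℝ≥0)} : Set (SingleObj.star (Multiplicative ℝ≥0) ⟶
        SingleObj.star (Multiplicative ℝ≥0))) := rfl
  rw [← hLang] at hmem
  obtain ⟨α, hα⟩ := hmem
  -- Q is finite
  have hQfin : Finite Q := by
    have h := hFin.1 (SingleObj.star _)
    have huniv : {X : Q | p.obj X = SingleObj.star _} = Set.univ :=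
      Set.eq_univ_of_forall fun X => rfl
    rw [huniv] at h
    exact Set.finite_univ_iff.mp h
  -- lifting factorizations
  have lift : ∀ t : ℝ≥0, t ≤ 1 → ∃ Z : Q, ∃ (β : q₀ ⟶ Z) (γ : Z ⟶ qf),
      p.map β = (Multiplicative.ofAdd t : Multiplicative ℝ≥0) ∧
      p.map γ = (Multiplicative.ofAdd (1 - t) : Multiplicative ℝ≥0) := by
    intro t ht
    have hfac : p.map α =
        (show p.obj q₀ ⟶ SingleObj.star (Multiplicative ℝ≥0) from Multiplicative.ofAdd t) ≫
        (show SingleObj.star (Multiplicative ℝ≥0) ⟶ p.obj qf from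
          Multiplicative.ofAdd (1 - t)) := by
      rw [singleObj_comp, hα]
      show Multiplicative.ofAdd (1 : ℝ≥0)
        = Multiplicative.ofAdd (1 - t) * Multiplicative.ofAdd t
      rw [← ofAdd_add, tsub_add_cancel_of_le ht]
    obtain ⟨⟨Z, β, γ⟩, ⟨e, h1, h2, h3⟩, -⟩ := hULF α _ _ hfac
    refine ⟨Z, β, γ, ?_, ?_⟩
    · rw [singleObj_comp_eqToHom] at h2
      exact h2
    · rw [singleObj_eqToHom_comp] at h3
      exact h3
  choose Z β γ hβ hγ using lift
  -- injectivity of t ↦ Z t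
  have hinj : ∀ t s (ht : t ≤ 1) (hs : s ≤ 1), Z t ht = Z s hs → t = s := by
    intro t s ht hs hZ
    have hmem2 : p.map (β t ht ≫ eqToHom hZ ≫ γ s hs) ∈
        { w : SingleObj.star (Multiplicative ℝ≥0) ⟶ SingleObj.star (Multiplicative ℝ≥0) |
            ∃ α : q₀ ⟶ qf, p.map α = w } := ⟨_, rfl⟩
    rw [hLang] at hmem2
    have hδ : p.map (β t ht ≫ eqToHom hZ ≫ γ s hs)
        = (Multiplicative.ofAdd ((1 - s) + t) : Multiplicative ℝ≥0) := by
      rw [p.map_comp, p.map_comp, eqToHom_map, singleObj_eqToHom_comp, singleObj_comp,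
        hβ, hγ, ← ofAdd_add]
    rw [hδ] at hmem2
    have : (1 - s) + t = 1 := Multiplicative.ofAdd.injective hmem2
    have hs' : (1 - s) + s = 1 := tsub_add_cancel_of_le hs
    exact add_left_cancel (this.trans hs'.symm)
  -- contradiction with infinitude of [0,1]
  have hF : Function.Injective (fun t : Set.Icc (0 : ℝ≥0) 1 => Z t.1 t.2.2) := by
    intro t s h
    exact Subtype.ext (hinj t.1 s.1 t.2.2 s.2.2 h)
  have : Finite (Set.Icc (0 : ℝ≥0) 1) := Finite.of_injective _ hF
  have hinf : (Set.Icc (0 : ℝ≥0) 1).Infinite := Set.Icc_infinite zero_lt_one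
  exact hinf (Set.toFinite _)
end
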